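/- arXiv:2003.05391 — 6 statements merged into one kernel-verified Lean document; each statement's English description precedes it below -/
import Mathlib

section
/- A numerical semigroup S (not symmetric) is nearly Gorenstein, i.e. M(S) ⊆ K(S) + (S - K(S)), if and only if for every minimal generator n_i of S there exists a pseudo-Frobenius number f_i such that n_i + f_i - f ∈ S for all pseudo-Frobenius numbers f of S. -/
/-- A numerical semigroup: a subset of ℕ containing 0, closed under addition,
with finite complement. -/
def IsNumSgp (S : Set ℕ) : Prop :=
  0 ∈ S ∧ (∀ a ∈ S, ∀ b ∈ S, a + b ∈ S) ∧ (Sᶜ : Set ℕ).Finite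

/-- An integer belongs to (the image in ℤ of) S. -/
def memZ (S : Set ℕ) (z : ℤ) : Prop := ∃ s ∈ S, (s : ℤ) = z

/-- F is the Frobenius number of S: the largest natural number not in S. -/
def IsFrob (S : Set ℕ) (F : ℕ) : Prop := F ∉ S ∧ ∀ n, F < n → n ∈ S

/-- The set of pseudo-Frobenius numbers of S. -/
def PF (S : Set ℕ) : Set ℕ := {f | f ∉ S ∧ ∀ s ∈ S, s ≠ 0 → f + s ∈ S}

/-- n is a minimal generator of S. -/
def IsMinGen (S : Set ℕ) (n : ℕ) : Prop :=
  n ∈ S ∧ n ≠ 0 ∧ ¬∃ a ∈ S, ∃ b ∈ S, a ≠ 0 ∧ b ≠ 0 ∧ a + b = n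

/-- S is almost symmetric (Nari): F - f ∈ PF(S) for every f ∈ PF(S). -/
def AlmostSym (S : Set ℕ) (F : ℕ) : Prop :=
  ∀ f ∈ PF S, ∃ g ∈ PF S, (g : ℤ) = (F : ℤ) - (f : ℤ)

/-- S is symmetric: PF(S) = {F(S)} (vacuously true when S = ℕ). -/
def IsSym (S : Set ℕ) : Prop := ∀ F, IsFrob S F → PF S = {F}

/-- (f_1,...,f_ν) is an NG-vector for S with minimal generators n_1,...,n_ν. -/
def IsNGVector {ν : ℕ} (S : Set ℕ) (n f : Fin ν → ℕ) : Prop :=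
  ∀ i, f i ∈ PF S ∧ ∀ g ∈ PF S, memZ S ((n i : ℤ) + (f i : ℤ) - (g : ℤ))

/-- S is nearly Gorenstein (generator criterion): for each minimal generator m
there is f ∈ PF(S) with m + f - g ∈ S for all g ∈ PF(S). -/
def NearlyGGen (S : Set ℕ) : Prop :=
  ∀ m, IsMinGen S m → ∃ f ∈ PF S, ∀ g ∈ PF S, memZ S ((m : ℤ) + (f : ℤ) - (g : ℤ))

/-- The canonical ideal K(S) = {z ∈ ℤ : F - z ∉ S}. -/
def Kan (S : Set ℕ) (F : ℕ) : Set ℤ := {z | ¬ memZ S ((F : ℤ) - z)}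

/-- The relative ideal (S - K(S)) = {z ∈ ℤ : z + K(S) ⊆ S}. -/
def SmK (S : Set ℕ) (F : ℕ) : Set ℤ := {z | ∀ k ∈ Kan S F, memZ S (z + k)}

/-- S is nearly Gorenstein: M(S) ⊆ K(S) + (S - K(S)). -/
def NearlyG (S : Set ℕ) (F : ℕ) : Prop :=
  ∀ m ∈ S, m ≠ 0 → ∃ k ∈ Kan S F, ∃ x ∈ SmK S F, k + x = (m : ℤ)

/-!
Every gap `g` of `S` has `f - g ∈ S` for some pseudo-Frobenius number `f`, so
`K(S) = ⋃_{f ∈ PF(S)} (F - f + S)` and `(S - K(S)) = {x | x + F - f ∈ S for all f ∈ PF(S)}`.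
Hence `m ∈ K(S) + (S - K(S))` exactly when `m + f - g ∈ S` for some `f ∈ PF(S)` and all
`g ∈ PF(S)`. This condition is preserved by adding elements of `S`, so it holds on `M(S)` as
soon as it holds on the minimal generators.
-/

section NumericalSemigroup

variable {S : Set ℕ} {F : ℕ}

lemma memZ_add_of_mem (hS : IsNumSgp S) {z : ℤ} {b : ℕ} (hz : memZ S z) (hb : b ∈ S) :
    memZ S (z + b) := by
  obtain ⟨s, hs, rfl⟩ := hz
  exact ⟨s + b, hS.2.1 s hs b hb, by push_cast; ring⟩

lemma IsFrob.mem_PF (hF : IsFrob S F) : F ∈ PF S :=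
  ⟨hF.1, fun _ _ _ => hF.2 _ (by omega)⟩

/-- The maximal gap of the form `g + s` with `s ∈ S` is pseudo-Frobenius. -/
lemma exists_mem_PF_eq_add_of_notMem (hS : IsNumSgp S) {g : ℕ} (hg : g ∉ S) :
    ∃ f ∈ PF S, ∃ s ∈ S, f = g + s := by
  set T : Set ℕ := {f | f ∉ S ∧ ∃ s ∈ S, f = g + s}
  have hT : T.Finite := hS.2.2.subset fun _ hx => hx.1
  obtain ⟨f, ⟨hfS, t, ht, rfl⟩, hmax⟩ :=
    hT.exists_maximalFor id T ⟨g, hg, 0, hS.1, rfl⟩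
  refine ⟨g + t, ⟨hfS, fun s hs hs0 => ?_⟩, t, ht, rfl⟩
  by_contra hgts
  have hle : g + t + s ≤ g + t :=
    hmax ⟨hgts, t + s, hS.2.1 t ht s hs, by ring⟩ (Nat.le_add_right _ s)
  omega

lemma mem_Kan_iff (hS : IsNumSgp S) (hF : IsFrob S F) {z : ℤ} :
    z ∈ Kan S F ↔ ∃ f ∈ PF S, ∃ s ∈ S, (F : ℤ) - f + s = z := by
  constructor
  · intro hz
    by_cases hzF : (F : ℤ) < z
    · exact ⟨F, hF.mem_PF, z.toNat, hF.2 _ (by omega), by omega⟩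
    · have hg : ((F : ℤ) - z).toNat ∉ S := fun h => hz ⟨_, h, by omega⟩
      obtain ⟨f, hf, s, hs, hfs⟩ := exists_mem_PF_eq_add_of_notMem hS hg
      exact ⟨f, hf, s, hs, by omega⟩
  · rintro ⟨f, hf, s, hs, rfl⟩ ⟨t, ht, htf⟩
    have hts : t + s = f := by omega
    exact hf.1 (hts ▸ hS.2.1 t ht s hs)

lemma sub_mem_Kan (hS : IsNumSgp S) (hF : IsFrob S F) {f : ℕ} (hf : f ∈ PF S) :
    (F : ℤ) - f ∈ Kan S F :=
  (mem_Kan_iff hS hF).2 ⟨f, hf, 0, hS.1, by simp⟩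

lemma mem_SmK_iff (hS : IsNumSgp S) (hF : IsFrob S F) {x : ℤ} :
    x ∈ SmK S F ↔ ∀ f ∈ PF S, memZ S (x + ((F : ℤ) - f)) := by
  refine ⟨fun hx f hf => hx _ (sub_mem_Kan hS hF hf), fun hx k hk => ?_⟩
  obtain ⟨f, hf, s, hs, rfl⟩ := (mem_Kan_iff hS hF).1 hk
  simpa only [add_assoc] using memZ_add_of_mem hS (hx f hf) hs

lemma nearlyG_iff (hS : IsNumSgp S) (hF : IsFrob S F) :
    NearlyG S F ↔ ∀ m ∈ S, m ≠ 0 → ∃ f ∈ PF S, ∀ g ∈ PF S, memZ S ((m : ℤ) + f - g) := by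
  refine forall₃_congr fun m _ _ => ⟨?_, ?_⟩
  · rintro ⟨k, hk, x, hx, hkx⟩
    obtain ⟨f, hf, s, hs, rfl⟩ := (mem_Kan_iff hS hF).1 hk
    refine ⟨f, hf, fun g hg => ?_⟩
    have hmem := memZ_add_of_mem hS ((mem_SmK_iff hS hF).1 hx g hg) hs
    rwa [show x + ((F : ℤ) - g) + s = m + f - g by omega] at hmem
  · rintro ⟨f, hf, hfg⟩
    refine ⟨(F : ℤ) - f, sub_mem_Kan hS hF hf, (m : ℤ) - F + f,
      (mem_SmK_iff hS hF).2 fun g hg => ?_, by ring⟩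
    rw [show (m : ℤ) - F + f + ((F : ℤ) - g) = m + f - g by ring]
    exact hfg g hg

lemma nearlyGGen_iff (hS : IsNumSgp S) :
    NearlyGGen S ↔ ∀ m ∈ S, m ≠ 0 → ∃ f ∈ PF S, ∀ g ∈ PF S, memZ S ((m : ℤ) + f - g) := by
  refine ⟨fun h m => ?_, fun h m hm => h m hm.1 hm.2.1⟩
  induction m using Nat.strong_induction_on with
  | _ m ih =>
    intro hm hm0
    by_cases hmin : IsMinGen S m
    · exact h m hmin
    obtain ⟨a, ha, b, hb, ha0, hb0, rfl⟩ : ∃ a ∈ S, ∃ b ∈ S, a ≠ 0 ∧ b ≠ 0 ∧ a + b = m := by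
      by_contra hdec
      exact hmin ⟨hm, hm0, hdec⟩
    obtain ⟨f, hf, hfg⟩ := ih a (by omega) ha ha0
    refine ⟨f, hf, fun g hg => ?_⟩
    have hmem := memZ_add_of_mem hS (hfg g hg) hb
    rwa [show (a : ℤ) + f - g + b = ((a + b : ℕ) : ℤ) + f - g by push_cast; ring] at hmem

end NumericalSemigroup

theorem stmt1_general (S : Set ℕ) (F : ℕ) (hS : IsNumSgp S) (hF : IsFrob S F) :
    NearlyG S F ↔
      ∀ m, IsMinGen S m → ∃ fi ∈ PF S, ∀ f ∈ PF S,
        memZ S ((m : ℤ) + (fi : ℤ) - (f : ℤ)) :=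
  (nearlyG_iff hS hF).trans (nearlyGGen_iff hS).symm

theorem stmt1 (S : Set ℕ) (F : ℕ) (hS : IsNumSgp S) (hF : IsFrob S F)
    (hns : PF S ≠ {F}) :
    NearlyG S F ↔
      ∀ m, IsMinGen S m → ∃ fi ∈ PF S, ∀ f ∈ PF S,
        memZ S ((m : ℤ) + (fi : ℤ) - (f : ℤ)) :=
  stmt1_general S F hS hF
end

section
/- Let S be a nearly Gorenstein numerical semigroup with NG-vector (f_1,...,f_ν) and let f ∈ PF(S). If A = (a_{ij}) is an RF⁺ matrix for f and B = (b_{ij}) is an RF⁻ matrix for f (relative to the NG-vector), then a_{jk} · b_{kj} = 0 for all j ≠ k. -/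
/-! If `a_{jk}` and `b_{kj}` were both positive, adding row `j` of `A` to row `k` of `B` would give
`f_k = f + (f_k - f) = ∑ᵢ (a_{ji} + b_{ki}) nᵢ`, in which the two diagonal entries `-1` are absorbed by
`b_{kj} ≥ 1` and `a_{jk} ≥ 1`. All coefficients are then nonnegative, so `f_k ∈ S`, which is impossible
for the pseudo-Frobenius number `f_k`. -/

open Finset

lemma memZ_natCast_iff {S : Set ℕ} {m : ℕ} : memZ S m ↔ m ∈ S :=
  ⟨fun ⟨_, hs, h⟩ => Nat.cast_injective h ▸ hs, fun hm => ⟨m, hm, rfl⟩⟩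

lemma IsNumSgp.memZ_sum_mul {S : Set ℕ} (hS : IsNumSgp S) {ι : Type*} [Fintype ι]
    (c : ι → ℤ) (g : ι → ℕ) (hc : ∀ i, 0 ≤ c i) (hg : ∀ i, g i ∈ S) :
    memZ S (∑ i, c i * g i) := by
  let M : AddSubmonoid ℕ := ⟨⟨S, fun ha hb => hS.2.1 _ ha _ hb⟩, hS.1⟩
  refine ⟨∑ i, (c i).toNat * g i, M.sum_mem fun i _ => M.nsmul_mem (hg i) _, ?_⟩
  push_cast
  exact sum_congr rfl fun i _ => by rw [Int.toNat_of_nonneg (hc i)]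

lemma add_nonneg_of_eq_neg_one {ι : Type*} {a b : ι → ℤ} {j k : ι} (hjk : j ≠ k)
    (ha : a j = -1) (hb : b k = -1) (ha₀ : ∀ i, i ≠ j → 0 ≤ a i) (hb₀ : ∀ i, i ≠ k → 0 ≤ b i)
    (hak : a k ≠ 0) (hbj : b j ≠ 0) (i : ι) : 0 ≤ a i + b i := by
  by_cases hij : i = j
  · subst hij
    have := hb₀ i hjk
    omega
  by_cases hik : i = k
  · subst hik
    have := ha₀ i hij
    omega
  exact add_nonneg (ha₀ i hij) (hb₀ i hik)

theorem stmt5_general (ν : ℕ) (S : Set ℕ) (n fv : Fin ν → ℕ) (f : ℕ)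
    (hS : IsNumSgp S)
    (hgen : ∀ m, IsMinGen S m ↔ ∃ i, n i = m)
    (hNG : IsNGVector S n fv)
    (A B : Fin ν → Fin ν → ℤ)
    (hA : ∀ i, A i i = -1 ∧ (∀ j, j ≠ i → 0 ≤ A i j) ∧
      (f : ℤ) = ∑ j, A i j * (n j : ℤ))
    (hB : ∀ i, (fv i = f → ∀ j, B i j = 0) ∧
      (fv i ≠ f → B i i = -1 ∧ (∀ j, j ≠ i → 0 ≤ B i j) ∧
        (fv i : ℤ) - (f : ℤ) = ∑ j, B i j * (n j : ℤ))) :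
    ∀ j k, j ≠ k → A j k * B k j = 0 := by
  intro j k hjk
  by_contra hne
  obtain ⟨hAjk, hBkj⟩ := mul_ne_zero_iff.mp hne
  have hfk : fv k ≠ f := fun h => hBkj ((hB k).1 h j)
  obtain ⟨hBkk, hB₀, hBsum⟩ := (hB k).2 hfk
  obtain ⟨hAjj, hA₀, hAsum⟩ := hA j
  have hrow : (fv k : ℤ) = ∑ i, (A j i + B k i) * n i := by
    simp only [add_mul, sum_add_distrib, ← hAsum, ← hBsum]
    ring
  have hmem : memZ S (fv k) := hrow ▸ hS.memZ_sum_mul _ n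
    (add_nonneg_of_eq_neg_one hjk hAjj hBkk hA₀ hB₀ hAjk hBkj) fun i => ((hgen _).2 ⟨i, rfl⟩).1
  exact (hNG k).1.1 (memZ_natCast_iff.mp hmem)

theorem stmt5 (ν : ℕ) (S : Set ℕ) (F : ℕ) (n fv : Fin ν → ℕ) (f : ℕ)
    (hS : IsNumSgp S) (hF : IsFrob S F) (hmono : StrictMono n)
    (hgen : ∀ m, IsMinGen S m ↔ ∃ i, n i = m)
    (hNG : IsNGVector S n fv) (hf : f ∈ PF S)
    (A B : Fin ν → Fin ν → ℤ)
    (hA : ∀ i, A i i = -1 ∧ (∀ j, j ≠ i → 0 ≤ A i j) ∧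
      (f : ℤ) = ∑ j, A i j * (n j : ℤ))
    (hB : ∀ i, (fv i = f → ∀ j, B i j = 0) ∧
      (fv i ≠ f → B i i = -1 ∧ (∀ j, j ≠ i → 0 ≤ B i j) ∧
        (fv i : ℤ) - (f : ℤ) = ∑ j, B i j * (n j : ℤ))) :
    ∀ j k, j ≠ k → A j k * B k j = 0 :=
  stmt5_general ν S n fv f hS hgen hNG A B hA hB
end

section
/- Let S be a nearly Gorenstein numerical semigroup with minimal generators n_1 < ... < n_ν and NG-vector (f_1, ..., f_ν), and suppose f_1, ..., f_i are pairwise distinct for some i ≤ ν. Then: (1) for every f ∈ PF(S) \ {f_1,...,f_i}, f_1 - f = -n_1 + a_{i+1}n_{i+1} + ... + a_ν n_ν with all a_j ≥ 0; (2) f_1 - f_j = n_j - n_1 for every j = 1, ..., i. -/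
/-!
Pseudo-Frobenius numbers never differ by a nonzero element of `S`; everything below reduces to
this. Let `z` index the smallest generator and take `k < i`. The NG-vector puts
`s = n_z + f_z - f_k` and `w = n_k + f_k - f_z` in `S`, both nonzero, and `s + w = n_z + n_k`
with `w ≥ n_z`, so `s ≤ n_k`. Splitting a generator off, `s = t + n_j` with `t ∈ S` and `j ≤ k`;
if `j < k`, induction on `k` gives `f_k + t = f_j`, so `f_k = f_j`, against distinctness. Hence
`s = n_k`, which is (2). For (1), the same computation shows that no `n_j` with `j < i` can be
split off `n_z + f_z - g`, so a representation of it by the generators avoids them.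
-/

theorem PF.eq_of_add_eq {S : Set ℕ} {g h t : ℕ} (hg : g ∈ PF S) (hh : h ∉ S) (ht : t ∈ S)
    (hgt : g + t = h) : g = h := by
  by_contra hne
  exact hh (hgt ▸ hg.2 t ht (by omega))

section Generators

variable {S : Set ℕ} {ι : Type*} [Fintype ι] {n : ι → ℕ}

theorem exists_sum_eq_of_forall_add_ne (h0 : 0 ∈ S) (hadd : ∀ a ∈ S, ∀ b ∈ S, a + b ∈ S)
    (hgen : ∀ m, IsMinGen S m → ∃ j, n j = m) (p : ι → Prop) {x : ℕ} (hx : x ∈ S)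
    (hp : ∀ j, p j → ∀ t ∈ S, t + n j ≠ x) :
    ∃ a : ι → ℕ, (∀ j, p j → a j = 0) ∧ x = ∑ j, a j * n j := by
  classical
  induction x using Nat.strong_induction_on with
  | _ x ih =>
  rcases eq_or_ne x 0 with rfl | hx0
  · exact ⟨0, fun _ _ => rfl, by simp⟩
  by_cases hmin : IsMinGen S x
  · obtain ⟨j, rfl⟩ := hgen _ hmin
    refine ⟨Pi.single j 1, fun k hk => ?_, by simp [Pi.single_apply]⟩
    have hkj : k ≠ j := by
      rintro rfl
      exact hp k hk 0 h0 (zero_add _)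
    simp [hkj]
  · obtain ⟨a, ha, b, hb, ha0, hb0, rfl⟩ : ∃ a ∈ S, ∃ b ∈ S, a ≠ 0 ∧ b ≠ 0 ∧ a + b = x := by
      by_contra h
      exact hmin ⟨hx, hx0, h⟩
    obtain ⟨u, hu, rfl⟩ := ih a (by omega) ha fun j hj t ht e =>
      hp j hj (t + b) (hadd t ht b hb) (by omega)
    obtain ⟨v, hv, rfl⟩ := ih b (by omega) hb fun j hj t ht e =>
      hp j hj (_ + t) (hadd _ ha t ht) (by omega)
    exact ⟨u + v, fun j hj => by simp [hu j hj, hv j hj],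
      by simp only [Pi.add_apply, add_mul, Finset.sum_add_distrib]⟩

theorem exists_add_eq_of_ne_zero (h0 : 0 ∈ S) (hadd : ∀ a ∈ S, ∀ b ∈ S, a + b ∈ S)
    (hgen : ∀ m, IsMinGen S m → ∃ j, n j = m) {x : ℕ} (hx : x ∈ S) (hx0 : x ≠ 0) :
    ∃ j, ∃ t ∈ S, t + n j = x := by
  by_contra! h
  obtain ⟨a, ha, rfl⟩ :=
    exists_sum_eq_of_forall_add_ne h0 hadd hgen (fun _ => True) hx fun j _ t ht => h j t ht
  exact hx0 (Finset.sum_eq_zero fun j _ => by simp [ha j trivial])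

end Generators

section NGVector

variable {ν : ℕ} {S : Set ℕ} {n f : Fin ν → ℕ}

theorem le_of_mem_of_ne_zero (h0 : 0 ∈ S) (hadd : ∀ a ∈ S, ∀ b ∈ S, a + b ∈ S)
    (hgen : ∀ m, IsMinGen S m → ∃ j, n j = m) (hmono : Monotone n) {z : Fin ν} (hz : ∀ j, z ≤ j)
    {x : ℕ} (hx : x ∈ S) (hx0 : x ≠ 0) : n z ≤ x := by
  obtain ⟨j, t, -, rfl⟩ := exists_add_eq_of_ne_zero h0 hadd hgen hx hx0
  have := hmono (hz j)
  omega

theorem IsNGVector.sub_eq_sub (h0 : 0 ∈ S) (hadd : ∀ a ∈ S, ∀ b ∈ S, a + b ∈ S)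
    (hgen : ∀ m, IsMinGen S m ↔ ∃ j, n j = m) (hmono : StrictMono n) (hNG : IsNGVector S n f)
    {z : Fin ν} (hz : ∀ j, z ≤ j) {i : ℕ}
    (hdist : ∀ j k : Fin ν, (j : ℕ) < i → (k : ℕ) < i → j ≠ k → f j ≠ f k)
    (k : Fin ν) (hk : (k : ℕ) < i) : (f z : ℤ) - f k = n k - n z := by
  induction k using WellFoundedLT.induction with
  | _ k ih =>
  have hgz := (hgen (n z)).2 ⟨z, rfl⟩
  have hgk := (hgen (n k)).2 ⟨k, rfl⟩
  obtain ⟨s, hs, hs_eq⟩ := (hNG z).2 (f k) (hNG k).1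
  obtain ⟨w, hw, hw_eq⟩ := (hNG k).2 (f z) (hNG z).1
  have hs0 : s ≠ 0 := by
    rintro rfl
    have := PF.eq_of_add_eq (hNG z).1 (hNG k).1.1 hgz.1 (by omega)
    exact hgz.2.1 (by omega)
  have hw0 : w ≠ 0 := by
    rintro rfl
    have := PF.eq_of_add_eq (hNG k).1 (hNG z).1.1 hgk.1 (by omega)
    exact hgk.2.1 (by omega)
  have hs_le : s ≤ n k := by
    have := le_of_mem_of_ne_zero h0 hadd (fun m => (hgen m).1) hmono.monotone hz hw hw0
    omega
  obtain ⟨j, t, ht, rfl⟩ := exists_add_eq_of_ne_zero h0 hadd (fun m => (hgen m).1) hs hs0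
  rcases (hmono.le_iff_le.1 (by omega : n j ≤ n k)).lt_or_eq with hjk | rfl
  · have hjk_val : (j : ℕ) < k := hjk
    have hj := ih j hjk (by omega)
    have := PF.eq_of_add_eq (hNG k).1 (hNG j).1.1 ht (by omega)
    exact absurd this.symm (hdist j k (by omega) hk hjk.ne)
  · omega

end NGVector

theorem stmt10_general (ν : ℕ) (S : Set ℕ) (n f : Fin ν → ℕ)
    (hS : IsNumSgp S) (hmono : StrictMono n)
    (hgen : ∀ m, IsMinGen S m ↔ ∃ i, n i = m)
    (hNG : IsNGVector S n f) (hν : 0 < ν)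
    (i : ℕ)
    (hdist : ∀ j k : Fin ν, (j : ℕ) < i → (k : ℕ) < i → j ≠ k → f j ≠ f k) :
    (∀ g ∈ PF S, (∀ j : Fin ν, (j : ℕ) < i → g ≠ f j) →
      ∃ a : Fin ν → ℕ, (∀ j : Fin ν, (j : ℕ) < i → a j = 0) ∧
        (f ⟨0, hν⟩ : ℤ) - (g : ℤ) = -(n ⟨0, hν⟩ : ℤ) + ∑ j, (a j : ℤ) * (n j : ℤ)) ∧
    (∀ j : Fin ν, (j : ℕ) < i →
      (f ⟨0, hν⟩ : ℤ) - (f j : ℤ) = (n j : ℤ) - (n ⟨0, hν⟩ : ℤ)) := by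
  obtain ⟨h0, hadd, -⟩ := hS
  have hsub := IsNGVector.sub_eq_sub h0 hadd hgen hmono hNG (z := ⟨0, hν⟩)
    (fun _ => Nat.zero_le _) hdist
  refine ⟨fun g hg hne => ?_, hsub⟩
  obtain ⟨s, hs, hs_eq⟩ := (hNG ⟨0, hν⟩).2 g hg
  obtain ⟨a, ha, rfl⟩ := exists_sum_eq_of_forall_add_ne h0 hadd (fun m => (hgen m).1)
    (fun j => (j : ℕ) < i) hs fun j hj t ht e =>
      hne j hj (PF.eq_of_add_eq hg (hNG j).1.1 ht (by have := hsub j hj; omega))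
  refine ⟨a, ha, ?_⟩
  push_cast at hs_eq
  linarith

theorem stmt10 (ν : ℕ) (S : Set ℕ) (F : ℕ) (n f : Fin ν → ℕ)
    (hS : IsNumSgp S) (hF : IsFrob S F) (hmono : StrictMono n)
    (hgen : ∀ m, IsMinGen S m ↔ ∃ i, n i = m)
    (hNG : IsNGVector S n f) (hν : 0 < ν)
    (i : ℕ) (hi : i ≤ ν)
    (hdist : ∀ j k : Fin ν, (j : ℕ) < i → (k : ℕ) < i → j ≠ k → f j ≠ f k) :
    (∀ g ∈ PF S, (∀ j : Fin ν, (j : ℕ) < i → g ≠ f j) →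
      ∃ a : Fin ν → ℕ, (∀ j : Fin ν, (j : ℕ) < i → a j = 0) ∧
        (f ⟨0, hν⟩ : ℤ) - (g : ℤ) = -(n ⟨0, hν⟩ : ℤ) + ∑ j, (a j : ℤ) * (n j : ℤ)) ∧
    (∀ j : Fin ν, (j : ℕ) < i →
      (f ⟨0, hν⟩ : ℤ) - (f j : ℤ) = (n j : ℤ) - (n ⟨0, hν⟩ : ℤ)) :=
  stmt10_general ν S n f hS hmono hgen hNG hν i hdist
end

section
/- Let T be a nearly Gorenstein numerical semigroup that is not symmetric, minimally generated by n_1, ..., n_ν. Then for every index i, gcd of the set {n_1, ..., n_ν} \ {n_i} equals 1. -/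
/-!
Suppose `d = gcd {n_j : j ≠ i}` is not `1`. It is coprime to `n_i` because `T` has finite
complement, so every element of `T` is `c n_i + t` with `d ∣ t`, and the residue of `c` modulo `d`
is determined by the element. Hence if `x ∈ T` and `x ≡ c n_i (mod d)` with `c < d`, then
`x - c n_i ∈ T`. Applied to `g + n_i` this forces every pseudo-Frobenius number `g` to satisfy
`g ≡ (d - 1) n_i (mod d)`. Now take `f = f_{n_i}` from the nearly Gorenstein condition and a second
pseudo-Frobenius number `g ≠ f`: then `n_i + f - g ≡ n_i (mod d)`, so `f - g ∈ T`, and `f = g + (f - g)`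
lies in `T`, a contradiction.
-/

open Finset

def natSpan {ν : ℕ} (n : Fin ν → ℕ) : Set ℕ := {m | ∃ c : Fin ν → ℕ, m = ∑ j, c j * n j}

lemma PF_nontrivial_of_not_isSym {S : Set ℕ} (hns : ¬ IsSym S) : (PF S).Nontrivial := by
  simp only [IsSym, not_forall] at hns
  obtain ⟨F, ⟨hFS, hF⟩, hPF⟩ := hns
  have hFPF : F ∈ PF S := ⟨hFS, fun s _ hs => hF _ (by omega)⟩
  exact (Set.nontrivial_iff_ne_singleton hFPF).mpr hPF

lemma eq_one_of_forall_mem_dvd {S : Set ℕ} (hS : (Sᶜ : Set ℕ).Finite) {e : ℕ}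
    (he : ∀ m ∈ S, e ∣ m) : e = 1 := by
  obtain ⟨M, hM⟩ := hS.bddAbove
  have hmem : ∀ k, M < k → k ∈ S := fun k hk => by
    by_contra h
    exact absurd (hM h) (not_le.mpr hk)
  have h1 := he (M + 1) (hmem _ (by omega))
  have h2 := he (M + 1 + 1) (hmem _ (by omega))
  exact Nat.dvd_one.mp ((Nat.dvd_add_right h1).mp h2)

namespace natSpan

variable {ν : ℕ} {n : Fin ν → ℕ}

lemma zero_mem : 0 ∈ natSpan n := ⟨0, by simp⟩

lemma dvd_of_mem {e m : ℕ} (he : ∀ j, e ∣ n j) (hm : m ∈ natSpan n) : e ∣ m := by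
  obtain ⟨c, rfl⟩ := hm
  exact dvd_sum fun j _ => (he j).mul_left _

lemma mem_iff_erase (i : Fin ν) {m : ℕ} :
    m ∈ natSpan n ↔ ∃ k, ∃ c : Fin ν → ℕ, m = k * n i + ∑ j ∈ univ.erase i, c j * n j := by
  constructor
  · rintro ⟨c, rfl⟩
    exact ⟨c i, c, (add_sum_erase _ (fun j => c j * n j) (mem_univ i)).symm⟩
  · rintro ⟨k, c, rfl⟩
    refine ⟨Function.update c i k, ?_⟩
    rw [← add_sum_erase _ _ (mem_univ i), Function.update_self]
    congr 1
    exact sum_congr rfl fun j hj => by rw [Function.update_of_ne (ne_of_mem_erase hj)]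

lemma mul_add_mem (i : Fin ν) (c : ℕ) {y : ℕ} (hy : y ∈ natSpan n) : c * n i + y ∈ natSpan n := by
  obtain ⟨k, b, rfl⟩ := (mem_iff_erase i).mp hy
  exact (mem_iff_erase i).mpr ⟨c + k, b, by ring⟩

lemma coprime_gcd_erase (hS : (natSpan n)ᶜ.Finite) (i : Fin ν) :
    Nat.Coprime ((univ.erase i).gcd n) (n i) := by
  refine eq_one_of_forall_mem_dvd hS fun m hm => dvd_of_mem (fun j => ?_) hm
  by_cases hj : j = i
  · exact hj ▸ Nat.gcd_dvd_right _ _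
  · exact (Nat.gcd_dvd_left _ _).trans (gcd_dvd (mem_erase.mpr ⟨hj, mem_univ j⟩))

variable {i : Fin ν}

/-- Writing `x = k n_i + t` with `d ∣ t`, coprimality gives `k ≡ c (mod d)`, hence `c ≤ k`. -/
lemma exists_eq_mul_add_of_modEq (hcop : Nat.Coprime ((univ.erase i).gcd n) (n i)) {x c : ℕ}
    (hx : x ∈ natSpan n) (hc : c < (univ.erase i).gcd n)
    (hmod : x ≡ c * n i [MOD (univ.erase i).gcd n]) :
    ∃ y ∈ natSpan n, x = c * n i + y := by
  obtain ⟨k, b, rfl⟩ := (mem_iff_erase i).mp hx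
  have hd : (univ.erase i).gcd n ∣ ∑ j ∈ univ.erase i, b j * n j :=
    dvd_sum fun j hj => (gcd_dvd hj).mul_left _
  have hk : k ≡ c [MOD (univ.erase i).gcd n] := by
    refine Nat.ModEq.cancel_right_of_coprime hcop (Nat.ModEq.trans ?_ hmod)
    simpa using (Nat.modEq_zero_iff_dvd.mpr hd).add_left (k * n i)
  have hck : c ≤ k := hk.symm.le_of_lt_add (by omega)
  refine ⟨(k - c) * n i + ∑ j ∈ univ.erase i, b j * n j, (mem_iff_erase i).mpr ⟨k - c, b, rfl⟩, ?_⟩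
  rw [← add_assoc, ← add_mul, Nat.add_sub_cancel' hck]

lemma modEq_of_mem_PF (hcop : Nat.Coprime ((univ.erase i).gcd n) (n i))
    (hd : 1 < (univ.erase i).gcd n) (hni : n i ≠ 0) {g : ℕ} (hg : g ∈ PF (natSpan n)) :
    g ≡ ((univ.erase i).gcd n - 1) * n i [MOD (univ.erase i).gcd n] := by
  obtain ⟨c, hc, hgc⟩ := Nat.exists_mul_mod_eq_of_coprime g hcop.symm (by omega)
  have hgc : g ≡ c * n i [MOD (univ.erase i).gcd n] := by
    rw [mul_comm] at hgc
    exact hgc.symm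
  obtain hcd | hcd : c = (univ.erase i).gcd n - 1 ∨ c + 1 < (univ.erase i).gcd n := by omega
  · exact hcd ▸ hgc
  · have hgn : g + n i ∈ natSpan n :=
      hg.2 _ (by simpa using mul_add_mem i 1 (zero_mem (n := n))) hni
    obtain ⟨y, hy, hgy⟩ := exists_eq_mul_add_of_modEq hcop hgn hcd
      (by simpa [add_mul] using hgc.add_right (n i))
    have hg_eq : g = c * n i + y := by rw [add_mul, one_mul] at hgy; omega
    exact absurd (hg_eq ▸ mul_add_mem i c hy) hg.1

/-- All pseudo-Frobenius numbers are congruent modulo `d`, so `m ≡ n_i (mod d)` and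
`m - n_i = f - g` lies in the semigroup. -/
lemma not_memZ_add_sub_of_mem_PF (hcop : Nat.Coprime ((univ.erase i).gcd n) (n i))
    (hd : 1 < (univ.erase i).gcd n) (hni : n i ≠ 0) {f g : ℕ}
    (hf : f ∈ PF (natSpan n)) (hg : g ∈ PF (natSpan n)) (hgf : g ≠ f) :
    ¬ memZ (natSpan n) ((n i : ℤ) + f - g) := by
  rintro ⟨m, hm, hmfg⟩
  have hmg : m + g = 1 * n i + f := by omega
  have hfg : f ≡ g [MOD (univ.erase i).gcd n] :=
    (modEq_of_mem_PF hcop hd hni hf).trans (modEq_of_mem_PF hcop hd hni hg).symm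
  have hmod : m ≡ 1 * n i [MOD (univ.erase i).gcd n] :=
    Nat.ModEq.add_right_cancel' g (hmg ▸ hfg.add_left (1 * n i))
  obtain ⟨y, hy, rfl⟩ := exists_eq_mul_add_of_modEq hcop hm hd hmod
  have hfy : f = g + y := by omega
  exact hf.1 (hfy ▸ hg.2 y hy (by omega))

end natSpan

theorem stmt14_general (ν : ℕ) (T : Set ℕ) (n : Fin ν → ℕ)
    (hT : IsNumSgp T)
    (hgen : T = {m : ℕ | ∃ c : Fin ν → ℕ, m = ∑ j, c j * n j})
    (hmin : ∀ i, IsMinGen T (n i))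
    (hNG : NearlyGGen T) (hns : ¬ IsSym T) :
    ∀ i : Fin ν, Finset.gcd (Finset.univ.erase i) n = 1 := by
  intro i
  subst hgen
  have hcop := natSpan.coprime_gcd_erase hT.2.2 i
  obtain ⟨f, hf, hfNG⟩ := hNG (n i) (hmin i)
  obtain ⟨g, hg, hgf⟩ := (PF_nontrivial_of_not_isSym hns).exists_ne f
  by_contra hd1
  obtain hd0 | hd := Nat.eq_zero_or_pos ((univ.erase i).gcd n)
  · have hni : n i = 1 := (Nat.coprime_zero_left _).mp (hd0 ▸ hcop)
    have hfmem : f * n i + 0 ∈ natSpan n := natSpan.mul_add_mem i f natSpan.zero_mem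
    rw [hni, mul_one, add_zero] at hfmem
    exact hf.1 hfmem
  · exact natSpan.not_memZ_add_sub_of_mem_PF hcop (by omega) (hmin i).2.1 hf hg hgf (hfNG g hg)

theorem stmt14 (ν : ℕ) (T : Set ℕ) (n : Fin ν → ℕ)
    (hT : IsNumSgp T) (hmono : StrictMono n)
    (hgen : T = {m : ℕ | ∃ c : Fin ν → ℕ, m = ∑ j, c j * n j})
    (hmin : ∀ i, IsMinGen T (n i))
    (hNG : NearlyGGen T) (hns : ¬ IsSym T) :
    ∀ i : Fin ν, Finset.gcd (Finset.univ.erase i) n = 1 :=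
  stmt14_general ν T n hT hgen hmin hNG hns
end

section
/- Let S = ⟨a, sa+d, sa+2d, ..., sa+nd⟩ be a numerical semigroup generated by a generalized arithmetic sequence with gcd(a,d) = 1. Then S is nearly Gorenstein if and only if s = 1 or a ≡ 2 (mod n). -/
/-!
Every element of `S` is `k a + w(t)` with `w(t) = s ⌈t/n⌉ a + t d` (`apery t`), and for `t < a`
the element `w(t)` is the least element of `S` congruent to `t d` modulo `a`. Writing
`a - 2 = n p + ρ` with `ρ < n`, the pseudo-Frobenius numbers are exactly `w(a - 1 - i) - a` for
`i ≤ ρ`: an arithmetic progression of step `d` ending at `F(S) = w(a - 1) - a`.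

If `ρ = 0` then `PF(S) = {F(S)}` and `f = F(S)` works for every generator. If `s = 1`, the
generator `a + k d` is matched with `f = w(a - 1 - min(k, ρ)) - a`, because `m + f - g` is then
again a generator `a + u d`. If `s ≥ 2` and `ρ ≥ 1`, no `f` works for `m = a`: against
`g = w(a - 2) - a` the choice `f = F(S)` produces `a + d < w(1)`, and against `g = F(S)` every
other choice produces `a - i d < a`.
-/

section Closure

variable {ι : Type*} {g : ι → ℕ}

lemma exists_eq_add_of_mem_closure_range {x : ℕ} (hx : x ∈ AddSubmonoid.closure (Set.range g))
    (hx0 : x ≠ 0) :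
    ∃ i, g i ≠ 0 ∧ ∃ y ∈ AddSubmonoid.closure (Set.range g), x = g i + y := by
  revert hx0
  induction hx using AddSubmonoid.closure_induction with
  | mem x hx =>
    obtain ⟨i, rfl⟩ := hx
    exact fun hi => ⟨i, hi, 0, zero_mem _, rfl⟩
  | zero => exact fun h0 => absurd rfl h0
  | add x y _ hy ihx ihy =>
    intro hxy
    rcases eq_or_ne x 0 with rfl | hx0
    · simpa using ihy (by simpa using hxy)
    · obtain ⟨i, hi, z, hz, rfl⟩ := ihx hx0
      exact ⟨i, hi, z + y, add_mem hz hy, by ring⟩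

lemma IsMinGen.exists_eq_of_closure_range {m : ℕ}
    (hm : IsMinGen (AddSubmonoid.closure (Set.range g)) m) :
    ∃ i, m = g i := by
  obtain ⟨hmS, hm0, hirred⟩ := hm
  obtain ⟨i, hi, y, hy, rfl⟩ := exists_eq_add_of_mem_closure_range hmS hm0
  rcases eq_or_ne y 0 with rfl | hy0
  · exact ⟨i, rfl⟩
  · exact (hirred ⟨g i, AddSubmonoid.subset_closure ⟨i, rfl⟩, y, hy, hi, hy0, rfl⟩).elim

lemma mem_PF_closure_range {f : ℕ} (hf : f ∉ AddSubmonoid.closure (Set.range g))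
    (h : ∀ i, f + g i ∈ AddSubmonoid.closure (Set.range g)) :
    f ∈ PF (AddSubmonoid.closure (Set.range g)) := by
  refine ⟨hf, fun x hx => ?_⟩
  induction hx using AddSubmonoid.closure_induction with
  | mem x hx =>
    obtain ⟨i, rfl⟩ := hx
    exact fun _ => h i
  | zero => exact fun h0 => absurd rfl h0
  | add x y _ hy ihx ihy =>
    intro hxy
    rcases eq_or_ne x 0 with rfl | hx0
    · simpa using ihy (by simpa using hxy)
    · simpa [add_assoc] using add_mem (ihx hx0) hy

end Closure

lemma IsMinGen.eq_one_of_one_mem {M : AddSubmonoid ℕ} {m : ℕ} (hm : IsMinGen M m) (h1 : 1 ∈ M) :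
    m = 1 := by
  obtain ⟨-, hm0, hirred⟩ := hm
  by_contra hm1
  have hmem (x : ℕ) : x ∈ M := by simpa using nsmul_mem h1 x
  exact hirred ⟨1, hmem 1, m - 1, hmem _, one_ne_zero, by omega, by omega⟩

namespace Nat

variable {n t u c p r : ℕ}

lemma lt_ceilDiv_iff (hn : 0 < n) : c < t ⌈/⌉ n ↔ n * c < t := by
  simpa only [not_le] using (ceilDiv_le_iff_le_mul hn).not

lemma le_mul_ceilDiv (hn : 0 < n) : t ≤ n * (t ⌈/⌉ n) := (ceilDiv_le_iff_le_mul hn).1 le_rfl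

lemma ceilDiv_mono (hn : 0 < n) (h : t ≤ u) : t ⌈/⌉ n ≤ u ⌈/⌉ n := (gc_mul_ceilDiv hn).monotone_l h

lemma ceilDiv_add_le (hn : 0 < n) : (t + u) ⌈/⌉ n ≤ t ⌈/⌉ n + u ⌈/⌉ n := by
  rw [ceilDiv_le_iff_le_mul hn, mul_add]
  exact add_le_add (le_mul_ceilDiv hn) (le_mul_ceilDiv hn)

lemma ceilDiv_mul_add (hr0 : 0 < r) (hrn : r ≤ n) : (n * p + r) ⌈/⌉ n = p + 1 := by
  have hn : 0 < n := hr0.trans_le hrn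
  apply le_antisymm
  · rw [ceilDiv_le_iff_le_mul hn, mul_add_one]
    omega
  · rw [Nat.add_one_le_iff, lt_ceilDiv_iff hn]
    omega

end Nat

namespace ArithSeqSemigroup

def gen (a s d j : ℕ) : ℕ := if j = 0 then a else s * a + j * d

def semigroup (a s d n : ℕ) : AddSubmonoid ℕ :=
  AddSubmonoid.closure (Set.range fun j : Fin (n + 1) => gen a s d j)

/-- For `t < a` these are the elements of the Apéry set of `a` in `semigroup a s d n`
(see `mem_iff_apery_le`). -/
def apery (a s d n t : ℕ) : ℕ := s * (t ⌈/⌉ n) * a + t * d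

variable {a s d n t u x f i : ℕ}

lemma gen_one (j : ℕ) : gen a 1 d j = a + j * d := by
  unfold gen
  split_ifs with hj <;> simp [hj]

lemma gen_mem (j : Fin (n + 1)) : gen a s d j ∈ semigroup a s d n :=
  AddSubmonoid.subset_closure ⟨j, rfl⟩

lemma a_mem : a ∈ semigroup a s d n := by simpa [gen] using gen_mem (s := s) (d := d) (n := n) 0

lemma apery_eq_gen (ht0 : 0 < t) (htn : t ≤ n) : apery a s d n t = gen a s d t := by
  have hc : t ⌈/⌉ n = 1 := by simpa using Nat.ceilDiv_mul_add (p := 0) ht0 htn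
  simp [apery, gen, hc, ht0.ne']

lemma apery_add_n (hn : 0 < n) : apery a s d n (t + n) = apery a s d n t + gen a s d n := by
  have hc : (t + n) ⌈/⌉ n = t ⌈/⌉ n + 1 := by
    simp only [Nat.ceilDiv_eq_add_pred_div]
    rw [show t + n + n - 1 = t + n - 1 + n by omega, Nat.add_div_right _ hn]
  simp only [apery, gen, hn.ne', if_false, hc]
  ring

lemma apery_mem (hn : 0 < n) (t : ℕ) : apery a s d n t ∈ semigroup a s d n := by
  induction t using Nat.strong_induction_on with
  | _ t ih =>
    rcases Nat.eq_zero_or_pos t with rfl | ht0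
    · simp [apery, zero_mem]
    rcases le_or_gt t n with htn | htn
    · rw [apery_eq_gen ht0 htn]
      exact gen_mem ⟨t, by omega⟩
    · obtain ⟨u, rfl⟩ : ∃ u, t = u + n := ⟨t - n, by omega⟩
      rw [apery_add_n hn]
      exact add_mem (ih u (by omega)) (gen_mem ⟨n, by omega⟩)

lemma apery_add_mul_mem (hn : 0 < n) (t k : ℕ) : apery a s d n t + k * a ∈ semigroup a s d n :=
  add_mem (apery_mem hn t) (by simpa using nsmul_mem a_mem k)

lemma exists_eq_apery_add_mul (hn : 0 < n) (hx : x ∈ semigroup a s d n) :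
    ∃ t k, x = apery a s d n t + k * a := by
  induction hx using AddSubmonoid.closure_induction with
  | mem x hx =>
    obtain ⟨j, rfl⟩ := hx
    rcases Nat.eq_zero_or_pos (j : ℕ) with hj | hj
    · exact ⟨0, 1, by simp [apery, gen, hj]⟩
    · exact ⟨j, 0, by rw [apery_eq_gen hj (by omega), zero_mul, add_zero]⟩
  | zero => exact ⟨0, 0, by simp [apery]⟩
  | add x y _ _ ihx ihy =>
    obtain ⟨t, k, rfl⟩ := ihx
    obtain ⟨u, l, rfl⟩ := ihy
    obtain ⟨e, he⟩ := Nat.exists_eq_add_of_le (Nat.ceilDiv_add_le (t := t) (u := u) hn)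
    have hsplit : s * (t ⌈/⌉ n) * a + s * (u ⌈/⌉ n) * a = s * ((t + u) ⌈/⌉ n) * a + s * e * a := by
      rw [← add_mul, ← mul_add, he]
      ring
    refine ⟨t + u, k + l + s * e, ?_⟩
    simp only [apery]
    linarith

lemma apery_modEq : apery a s d n t ≡ t * d [MOD a] := by
  unfold apery Nat.ModEq
  rw [add_comm, Nat.add_mul_mod_self_right]

lemma apery_add_mul_modEq (k : ℕ) : apery a s d n t + k * a ≡ t * d [MOD a] :=
  (Nat.add_mul_mod_self_right _ k a).trans apery_modEq

lemma apery_mono (hn : 0 < n) (h : t ≤ u) : apery a s d n t ≤ apery a s d n u := by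
  unfold apery
  gcongr
  exact Nat.ceilDiv_mono hn h

lemma le_apery (hs : 0 < s) (hn : 0 < n) (ht : 0 < t) : a ≤ apery a s d n t := by
  have hc : 0 < t ⌈/⌉ n := (Nat.lt_ceilDiv_iff hn).2 (by simpa using ht)
  unfold apery
  nlinarith [Nat.mul_pos hs hc]

lemma mem_of_apery_le (hn : 0 < n) (hx : x ≡ t * d [MOD a]) (hle : apery a s d n t ≤ x) :
    x ∈ semigroup a s d n := by
  obtain ⟨k, hk⟩ := (Nat.modEq_iff_dvd' hle).1 (apery_modEq.trans hx.symm)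
  rw [show x = apery a s d n t + k * a by rw [mul_comm] at hk; omega]
  exact apery_add_mul_mem hn t k

/-- Coprimality makes `t ↦ t * d` injective modulo `a`, so `apery u + k * a ≡ t * d` forces
`t ≤ u`. -/
lemma apery_le_of_mem (hn : 0 < n) (hcop : a.Coprime d) (ht : t < a) (hx : x ≡ t * d [MOD a])
    (hxS : x ∈ semigroup a s d n) : apery a s d n t ≤ x := by
  obtain ⟨u, k, rfl⟩ := exists_eq_apery_add_mul hn hxS
  have hut : u ≡ t [MOD a] :=
    Nat.ModEq.cancel_right_of_coprime hcop ((apery_add_mul_modEq k).symm.trans hx)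
  have htu : t ≤ u := by
    have h := Nat.mod_le u a
    rw [hut, Nat.mod_eq_of_lt ht] at h
    exact h
  exact (apery_mono hn htu).trans (Nat.le_add_right _ _)

lemma mem_iff_apery_le (hn : 0 < n) (hcop : a.Coprime d) (ht : t < a) (hx : x ≡ t * d [MOD a]) :
    x ∈ semigroup a s d n ↔ apery a s d n t ≤ x :=
  ⟨apery_le_of_mem hn hcop ht hx, mem_of_apery_le hn hx⟩

lemma exists_apery_eq_add (ha : 0 < a) (hn : 0 < n) (hcop : a.Coprime d)
    (hf : f ∉ semigroup a s d n) (hfa : f + a ∈ semigroup a s d n) :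
    ∃ t < a, apery a s d n t = f + a := by
  obtain ⟨u, k, hu⟩ := exists_eq_apery_add_mul hn hfa
  have hmod : f + a ≡ u % a * d [MOD a] :=
    hu ▸ (apery_add_mul_modEq k).trans ((Nat.mod_modEq u a).symm.mul_right d)
  have hle := apery_le_of_mem hn hcop (Nat.mod_lt u ha) hmod hfa
  have hlt : f < apery a s d n (u % a) := by
    by_contra! h
    exact hf (mem_of_apery_le hn (Nat.add_modEq_right.symm.trans hmod) h)
  obtain ⟨c, hc⟩ := (Nat.modEq_iff_dvd' hle).1 (apery_modEq.trans hmod.symm)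
  have hc0 : c = 0 := by
    by_contra hc0
    have : a ≤ a * c := Nat.le_mul_of_pos_right a (Nat.pos_of_ne_zero hc0)
    omega
  exact ⟨u % a, Nat.mod_lt u ha, by rw [hc0, mul_zero] at hc; omega⟩

lemma ceilDiv_sub_one_sub (ha : 2 ≤ a) (hn : 0 < n) (hi : i ≤ (a - 2) % n) :
    (a - 1 - i) ⌈/⌉ n = (a - 2) / n + 1 := by
  have hdiv := Nat.div_add_mod (a - 2) n
  have hmod := Nat.mod_lt (a - 2) hn
  rw [show a - 1 - i = n * ((a - 2) / n) + ((a - 2) % n - i + 1) by omega]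
  exact Nat.ceilDiv_mul_add (by omega) (by omega)

lemma apery_sub_add_mul (ha : 2 ≤ a) (hn : 0 < n) (hi : i ≤ (a - 2) % n) :
    apery a s d n (a - 1 - i) + i * d = apery a s d n (a - 1) := by
  have h0 := ceilDiv_sub_one_sub (i := 0) ha hn (Nat.zero_le _)
  have hia : i ≤ a - 1 := (hi.trans (Nat.mod_le _ _)).trans (by omega)
  rw [Nat.sub_zero] at h0
  rw [apery, apery, ceilDiv_sub_one_sub ha hn hi, h0, add_assoc, ← add_mul, Nat.sub_add_cancel hia]

/-- The generator `j = n ⌈t/n⌉ + 1 - t` carries `t` into the next `⌈·/n⌉`-block, so that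
`apery t + gen j = apery (t + j)` and `f + gen j` falls just below an Apéry element. -/
lemma exists_add_gen_not_mem (hn : 0 < n) (hcop : a.Coprime d) (ht : n * (t ⌈/⌉ n) + 1 < a)
    (hf : f + a = apery a s d n t) :
    ∃ j : Fin (n + 1), (j : ℕ) ≠ 0 ∧ f + gen a s d j ∉ semigroup a s d n := by
  set q := t ⌈/⌉ n
  have htq : t ≤ n * q := Nat.le_mul_ceilDiv hn
  have hqt : n * q < t + n := by
    rcases Nat.eq_zero_or_pos q with hq0 | hq0
    · rw [hq0]; omega
    · have := (Nat.lt_ceilDiv_iff hn).1 (show q - 1 < q by omega)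
      rw [Nat.mul_sub_one] at this
      omega
  refine ⟨⟨n * q + 1 - t, by omega⟩, show n * q + 1 - t ≠ 0 by omega, fun hmem => ?_⟩
  have hgen : gen a s d (n * q + 1 - t) = s * a + (n * q + 1 - t) * d := by
    simp [gen, show n * q + 1 - t ≠ 0 by omega]
  have hnext : apery a s d n (n * q + 1) = f + gen a s d (n * q + 1 - t) + a := by
    have hc : (n * q + 1) ⌈/⌉ n = q + 1 := Nat.ceilDiv_mul_add one_pos hn
    have hsplit : (n * q + 1) * d = t * d + (n * q + 1 - t) * d := by
      rw [← add_mul, Nat.add_sub_cancel' (by omega)]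
    rw [hgen, apery, hc, hsplit]
    simp only [apery] at hf
    linarith
  have hmod : f + gen a s d (n * q + 1 - t) ≡ (n * q + 1) * d [MOD a] := by
    refine Nat.add_modEq_right.symm.trans ?_
    rw [← hnext]
    exact apery_modEq
  have := apery_le_of_mem hn hcop (by omega) hmod hmem
  omega

lemma exists_le_mod_of_mem_PF (ha : 2 ≤ a) (hd : 0 < d) (hn : 0 < n) (hcop : a.Coprime d)
    (hf : f ∈ PF (semigroup a s d n)) :
    ∃ i ≤ (a - 2) % n, f + a = apery a s d n (a - 1 - i) := by
  obtain ⟨hfS, hfPF⟩ := hf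
  obtain ⟨t, hta, ht⟩ := exists_apery_eq_add (by omega) hn hcop hfS (hfPF a a_mem (by omega))
  refine ⟨a - 1 - t, ?_, by rw [show a - 1 - (a - 1 - t) = t by omega, ht]⟩
  by_contra! hlt
  have hdiv := Nat.div_add_mod (a - 2) n
  have hqp : t ⌈/⌉ n ≤ (a - 2) / n := by
    rw [ceilDiv_le_iff_le_mul hn]
    omega
  have hblock : n * (t ⌈/⌉ n) + 1 < a := by
    have := Nat.mul_le_mul_left n hqp
    omega
  obtain ⟨j, hj0, hj⟩ := exists_add_gen_not_mem hn hcop hblock ht.symm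
  refine hj (hfPF _ (gen_mem j) ?_)
  simp only [gen, hj0, if_false]
  positivity

/-- When `t` lies in the last `⌈·/n⌉`-block, `w t + gen j - a` stays above the Apéry element of its
residue: either `t + j` is in the same block, or it wraps around to `t + j - a < n`. -/
lemma add_gen_mem_of_le_mod (ha : 2 ≤ a) (hs : 0 < s) (hd : 0 < d) (hn : 0 < n)
    (hi : i ≤ (a - 2) % n) (hf : f + a = apery a s d n (a - 1 - i)) (j : Fin (n + 1)) :
    f + gen a s d j ∈ semigroup a s d n := by
  rcases Nat.eq_zero_or_pos (j : ℕ) with hj | hj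
  · rw [show gen a s d j = a by simp [gen, hj], hf]
    exact apery_mem hn _
  have hp := ceilDiv_sub_one_sub ha hn hi
  generalize ht : a - 1 - i = t at hf hp
  have hmod : f + gen a s d j ≡ (t + j) * d [MOD a] := by
    have hfmod : f ≡ t * d [MOD a] := Nat.add_modEq_right.symm.trans (hf ▸ apery_modEq)
    simp only [gen, hj.ne', if_false, add_mul]
    refine hfmod.add ?_
    simp [Nat.ModEq, Nat.mul_comm s a]
  rw [apery, hp] at hf
  have hj' := j.isLt
  have has : a ≤ s * a := Nat.le_mul_of_pos_left a hs
  rcases le_or_gt (t + j) (a - 1) with htj | htj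
  · refine mem_of_apery_le hn hmod ?_
    have hc : (t + j) ⌈/⌉ n ≤ (a - 2) / n + 1 := by
      rw [ceilDiv_le_iff_le_mul hn, mul_add_one]
      have hdiv := Nat.div_add_mod (a - 2) n
      have hρ := Nat.mod_lt (a - 2) hn
      omega
    have : s * ((t + j) ⌈/⌉ n) * a ≤ s * ((a - 2) / n + 1) * a := by gcongr
    simp only [apery, gen, hj.ne', if_false, add_mul] at hf this ⊢
    omega
  · have hsplit : (t + j - a) * d + a * d = (t + j) * d := by
      rw [← add_mul, Nat.sub_add_cancel (by omega)]
    refine mem_of_apery_le (t := t + j - a) hn (hmod.trans ?_) ?_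
    · rw [← hsplit]
      simp [Nat.ModEq, Nat.mul_comm a d, Nat.add_mul_mod_self_right]
    · have hc : (t + j - a) ⌈/⌉ n ≤ 1 := by
        rw [ceilDiv_le_iff_le_mul hn]
        omega
      have : s * ((t + j - a) ⌈/⌉ n) * a ≤ s * 1 * a := by gcongr
      have had : a ≤ a * d := Nat.le_mul_of_pos_right a hd
      simp only [apery, gen, hj.ne', if_false, add_mul, mul_one] at hf this hsplit ⊢
      omega

lemma mem_PF_of_le_mod (ha : 2 ≤ a) (hs : 0 < s) (hd : 0 < d) (hn : 0 < n) (hcop : a.Coprime d)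
    (hi : i ≤ (a - 2) % n) (hf : f + a = apery a s d n (a - 1 - i)) :
    f ∈ PF (semigroup a s d n) := by
  refine mem_PF_closure_range ?_ (add_gen_mem_of_le_mod ha hs hd hn hi hf)
  have hfmod : f ≡ (a - 1 - i) * d [MOD a] := Nat.add_modEq_right.symm.trans (hf ▸ apery_modEq)
  have hρa := Nat.mod_le (a - 2) n
  change f ∉ semigroup a s d n
  rw [mem_iff_apery_le hn hcop (by omega) hfmod]
  omega

lemma mem_PF_iff (ha : 2 ≤ a) (hs : 0 < s) (hd : 0 < d) (hn : 0 < n) (hcop : a.Coprime d) :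
    f ∈ PF (semigroup a s d n) ↔ ∃ i ≤ (a - 2) % n, f + a = apery a s d n (a - 1 - i) :=
  ⟨exists_le_mod_of_mem_PF ha hd hn hcop,
    fun ⟨_, hi, hf⟩ => mem_PF_of_le_mod ha hs hd hn hcop hi hf⟩

lemma modEq_two_iff (ha : 2 ≤ a) : a ≡ 2 [MOD n] ↔ (a - 2) % n = 0 := by
  rw [Nat.ModEq.comm, Nat.modEq_iff_dvd' ha, Nat.dvd_iff_mod_eq_zero]

lemma nearlyGGen_of_modEq_two (ha : 2 ≤ a) (hs : 0 < s) (hd : 0 < d) (hn : 0 < n)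
    (hcop : a.Coprime d) (h : a ≡ 2 [MOD n]) : NearlyGGen (semigroup a s d n) := by
  have hρ := (modEq_two_iff ha).1 h
  have hF : apery a s d n (a - 1) - a + a = apery a s d n (a - 1) :=
    Nat.sub_add_cancel (le_apery hs hn (by omega))
  have hPF : ∀ g ∈ PF (semigroup a s d n), g = apery a s d n (a - 1) - a := by
    intro g hg
    obtain ⟨i, hi, hg⟩ := (mem_PF_iff ha hs hd hn hcop).1 hg
    rw [hρ, Nat.le_zero] at hi
    subst hi
    rw [Nat.sub_zero] at hg
    omega
  intro m hm
  refine ⟨_, (mem_PF_iff ha hs hd hn hcop).2 ⟨0, hρ.ge, hF⟩, fun g hg => ⟨m, hm.1, ?_⟩⟩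
  rw [hPF g hg]
  ring

lemma nearlyGGen_of_s_eq_one (ha : 2 ≤ a) (hd : 0 < d) (hn : 0 < n) (hcop : a.Coprime d) :
    NearlyGGen (semigroup a 1 d n) := by
  have hρ := Nat.mod_lt (a - 2) hn
  have hρa := Nat.mod_le (a - 2) n
  intro m hm
  obtain ⟨k, rfl⟩ := hm.exists_eq_of_closure_range
  have hk := k.isLt
  obtain ⟨i, hiρ, hik, hkρ⟩ : ∃ i ≤ (a - 2) % n, i ≤ k ∧ k + (a - 2) % n ≤ n + i := by
    refine ⟨min k ((a - 2) % n), min_le_right _ _, min_le_left _ _, ?_⟩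
    rw [Nat.min_def]
    split_ifs <;> omega
  have hf : apery a 1 d n (a - 1 - i) - a + a = apery a 1 d n (a - 1 - i) :=
    Nat.sub_add_cancel (le_apery one_pos hn (by omega))
  refine ⟨_, (mem_PF_iff ha one_pos hd hn hcop).2 ⟨i, hiρ, hf⟩, fun g hg => ?_⟩
  obtain ⟨i', hi', hg⟩ := (mem_PF_iff ha one_pos hd hn hcop).1 hg
  have hu : k - i + i' < n + 1 := by omega
  refine ⟨gen a 1 d (k - i + i'), gen_mem ⟨k - i + i', hu⟩, ?_⟩
  have e₁ := apery_sub_add_mul (s := 1) (d := d) ha hn hiρ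
  have e₂ := apery_sub_add_mul (s := 1) (d := d) ha hn hi'
  have e₃ : (k - i + i') * d + i * d = k * d + i' * d := by
    rw [← add_mul, ← add_mul, show k - i + i' + i = k + i' by omega]
  rw [gen_one, gen_one]
  omega

lemma not_nearlyGGen (ha : 2 ≤ a) (hs : 2 ≤ s) (hd : 0 < d) (hn : 0 < n) (hcop : a.Coprime d)
    (hρ : (a - 2) % n ≠ 0) (hmin : IsMinGen (semigroup a s d n) a) :
    ¬ NearlyGGen (semigroup a s d n) := by
  have hρa := Nat.mod_le (a - 2) n
  intro hNG
  obtain ⟨f, hf, hfg⟩ := hNG a hmin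
  obtain ⟨i, hi, hf⟩ := (mem_PF_iff ha (by omega) hd hn hcop).1 hf
  have e := apery_sub_add_mul (s := s) (d := d) ha hn hi
  rcases Nat.eq_zero_or_pos i with rfl | hi0
  · have e₁ := apery_sub_add_mul (s := s) (d := d) ha hn (i := 1) (by omega)
    have hg : apery a s d n (a - 1 - 1) - a + a = apery a s d n (a - 1 - 1) :=
      Nat.sub_add_cancel (le_apery (by omega) hn (by omega))
    obtain ⟨x, hxS, hx⟩ := hfg _ ((mem_PF_iff ha (by omega) hd hn hcop).2 ⟨1, by omega, hg⟩)
    have hxad : x = a + d := by omega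
    have h1 : apery a s d n 1 = s * a + d := by
      rw [apery_eq_gen one_pos hn]
      simp [gen]
    have := apery_le_of_mem (t := 1) hn hcop (by omega) (by simp [hxad, Nat.ModEq]) hxS
    nlinarith
  · have hF : apery a s d n (a - 1) - a + a = apery a s d n (a - 1) :=
      Nat.sub_add_cancel (le_apery (by omega) hn (by omega))
    obtain ⟨x, hxS, hx⟩ := hfg _ ((mem_PF_iff ha (by omega) hd hn hcop).2 ⟨0, by omega, hF⟩)
    have hxa : x + i * d = a := by omega
    have hmod : x ≡ (a - i) * d [MOD a] := by
      refine Nat.ModEq.add_right_cancel' (i * d) ?_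
      rw [hxa, ← add_mul, Nat.sub_add_cancel (by omega)]
      simp [Nat.ModEq]
    have := apery_le_of_mem (t := a - i) hn hcop (by omega) hmod hxS
    have := le_apery (a := a) (d := d) (by omega : 0 < s) hn (show 0 < a - i by omega)
    have : 0 < i * d := Nat.mul_pos hi0 hd
    omega

end ArithSeqSemigroup

open ArithSeqSemigroup in
theorem stmt15 (a s d n : ℕ) (ha : 0 < a) (hs : 0 < s) (hd : 0 < d) (hn : 0 < n)
    (hcop : Nat.Coprime a d) (S : Set ℕ)
    (hgen : S = {m : ℕ | ∃ c : Fin (n + 1) → ℕ,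
      m = ∑ j, c j * (if (j : ℕ) = 0 then a else s * a + (j : ℕ) * d)})
    (hmin : ∀ j : Fin (n + 1),
      IsMinGen S (if (j : ℕ) = 0 then a else s * a + (j : ℕ) * d)) :
    NearlyGGen S ↔ (s = 1 ∨ a ≡ 2 [MOD n]) := by
  have hS : S = semigroup a s d n := by
    ext x
    simp [hgen, semigroup, AddSubmonoid.mem_closure_range_iff_of_fintype, gen]
  subst hS
  have ha2 : 2 ≤ a := by
    by_contra! h
    obtain rfl : a = 1 := by omega
    have := (hmin ⟨1, by omega⟩).eq_one_of_one_mem a_mem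
    simp only [one_ne_zero, if_false, mul_one, one_mul] at this
    omega
  constructor
  · intro hNG
    by_contra! h
    exact not_nearlyGGen ha2 (by omega) hd hn hcop ((modEq_two_iff ha2).not.1 h.2)
      (by simpa using hmin 0) hNG
  · rintro (rfl | h)
    · exact nearlyGGen_of_s_eq_one ha2 hd hn hcop
    · exact nearlyGGen_of_modEq_two ha2 hs hd hn hcop h
end

section
/- The numerical semigroup S = ⟨4, 5, 11⟩ is nearly Gorenstein but not almost symmetric; specifically PF(S) = {6, 7} and (7, 6, 6) is an NG-vector for S. -/
/-! The semigroup ⟨4, 5, 11⟩ is {0, 4, 5} ∪ [8, ∞), with gaps 1, 2, 3, 6, 7. A gap f is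
pseudo-Frobenius iff f + 4 and f + 5 lie in S, which leaves exactly 6 and 7. For the NG-vector,
n_i + f_i is 11 or 17, and subtracting 6 or 7 lands in {4, 5, 10, 11} ⊆ S. Finally 7 - 6 = 1 is
not pseudo-Frobenius, so S is not almost symmetric. -/

theorem memZ_iff {S : Set ℕ} {z : ℤ} : memZ S z ↔ 0 ≤ z ∧ z.toNat ∈ S := by
  constructor
  · rintro ⟨s, hs, rfl⟩
    exact ⟨s.cast_nonneg, by simpa using hs⟩
  · rintro ⟨hz, hS⟩
    exact ⟨z.toNat, hS, Int.toNat_of_nonneg hz⟩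

theorem nearlyGGen_of_isNGVector {ν : ℕ} {S : Set ℕ} {n f : Fin ν → ℕ}
    (hv : IsNGVector S n f) (hn : ∀ m, IsMinGen S m → ∃ i, n i = m) : NearlyGGen S := by
  intro m hm
  obtain ⟨i, rfl⟩ := hn m hm
  exact ⟨f i, hv i⟩

def numSgp4511 : Set ℕ := {m | ∃ a b c : ℕ, 4 * a + 5 * b + 11 * c = m}

theorem mem_numSgp4511_iff {n : ℕ} : n ∈ numSgp4511 ↔ n = 0 ∨ n = 4 ∨ n = 5 ∨ 8 ≤ n := by
  constructor
  · rintro ⟨a, b, c, rfl⟩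
    by_cases hsmall : a < 2 ∧ b < 2 ∧ c = 0
    · obtain ⟨ha, hb, rfl⟩ := hsmall
      interval_cases a <;> interval_cases b <;> simp
    · omega
  · intro h
    rcases (by omega : n % 4 = 0 ∨ n % 4 = 1 ∨ n % 4 = 2 ∨ n % 4 = 3) with h4 | h4 | h4 | h4
    · exact ⟨n / 4, 0, 0, by omega⟩
    · exact ⟨n / 4 - 1, 1, 0, by omega⟩
    · exact ⟨n / 4 - 2, 2, 0, by omega⟩
    · exact ⟨n / 4 - 2, 0, 1, by omega⟩

theorem PF_numSgp4511 : PF numSgp4511 = {6, 7} := by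
  ext f
  simp only [PF, Set.mem_ofPred_eq, Set.mem_insert_iff, Set.mem_singleton_iff]
  constructor
  · rintro ⟨hf, hadd⟩
    have h4 := hadd 4 (mem_numSgp4511_iff.2 (by omega)) (by omega)
    have h5 := hadd 5 (mem_numSgp4511_iff.2 (by omega)) (by omega)
    rw [mem_numSgp4511_iff] at hf h4 h5
    omega
  · intro hf
    refine ⟨by rw [mem_numSgp4511_iff]; omega, fun s hs hs0 => ?_⟩
    rw [mem_numSgp4511_iff] at hs ⊢
    omega

theorem eq_of_isMinGen_numSgp4511 {m : ℕ} (h : IsMinGen numSgp4511 m) :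
    m = 4 ∨ m = 5 ∨ m = 11 := by
  obtain ⟨hm, hm0, hirr⟩ := h
  -- every element of S above 5 other than 11 is 4 + s or 5 + s with 0 ≠ s ∈ S
  have hsplit (a : ℕ) (ha : a = 4 ∨ a = 5) : ¬(a < m ∧ m - a ∈ numSgp4511) := fun ⟨hlt, hb⟩ =>
    hirr ⟨a, mem_numSgp4511_iff.2 (by omega), m - a, hb, by omega, by omega, by omega⟩
  have h4 := hsplit 4 (by omega)
  have h5 := hsplit 5 (by omega)
  rw [mem_numSgp4511_iff] at hm h4 h5
  omega

theorem isNGVector_numSgp4511 : IsNGVector numSgp4511 ![4, 5, 11] ![7, 6, 6] := by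
  intro i
  rw [PF_numSgp4511]
  fin_cases i <;> simp [memZ_iff, mem_numSgp4511_iff]

theorem not_almostSym_numSgp4511 : ¬ AlmostSym numSgp4511 7 := by
  intro h
  obtain ⟨g, hg, hg1⟩ := h 6 (by simp [PF_numSgp4511])
  simp only [PF_numSgp4511, Set.mem_insert_iff, Set.mem_singleton_iff] at hg
  omega

theorem stmt18 (S : Set ℕ) (hS : S = {m : ℕ | ∃ a b c : ℕ, 4 * a + 5 * b + 11 * c = m}) :
    PF S = {6, 7} ∧
    IsNGVector S ![4, 5, 11] ![7, 6, 6] ∧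
    NearlyGGen S ∧
    ¬ AlmostSym S 7 := by
  obtain rfl : S = numSgp4511 := hS
  refine ⟨PF_numSgp4511, isNGVector_numSgp4511,
    nearlyGGen_of_isNGVector isNGVector_numSgp4511 fun m hm => ?_, not_almostSym_numSgp4511⟩
  rcases eq_of_isMinGen_numSgp4511 hm with rfl | rfl | rfl
  exacts [⟨0, rfl⟩, ⟨1, rfl⟩, ⟨2, rfl⟩]
end
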